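/- arXiv:2311.06395 — 2 statements merged into one kernel-verified Lean document; each statement's English description precedes it below -/
import Mathlib

section
/- Let W = (W_1, …, W_D) be matrices, and let ‖W‖₂² = Σ_{j=1}^D ‖W_j‖_F² (total squared Frobenius norm). Then ∏_{j=1}^D max(1, ‖W_j‖_op) ≤ (1 + ‖W‖₂²/D)^{D/2}. -/
open Finset

/-- The ℓ²→ℓ² operator (spectral) norm of a real matrix. -/
noncomputable def matOpNorm {m n : ℕ} (M : Matrix (Fin m) (Fin n) ℝ) : ℝ :=
  ‖LinearMap.toContinuousLinearMap (Matrix.toEuclideanLin M)‖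

lemma matOpNorm_nonneg {m n : ℕ} (M : Matrix (Fin m) (Fin n) ℝ) : 0 ≤ matOpNorm M :=
  norm_nonneg _

lemma matOpNorm_sq_le_frob {m n : ℕ} (M : Matrix (Fin m) (Fin n) ℝ) :
    (matOpNorm M) ^ 2 ≤ ∑ i, ∑ k, (M i k) ^ 2 := by
  have hF : (0:ℝ) ≤ ∑ i, ∑ k, (M i k) ^ 2 :=
    Finset.sum_nonneg fun i _ => Finset.sum_nonneg fun k _ => sq_nonneg _
  have h : matOpNorm M ≤ Real.sqrt (∑ i, ∑ k, (M i k) ^ 2) := by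
    apply ContinuousLinearMap.opNorm_le_bound _ (Real.sqrt_nonneg _)
    intro x
    rw [LinearMap.coe_toContinuousLinearMap']
    have hxn : ‖x‖ = Real.sqrt (∑ k, (x k) ^ 2) := by
      rw [EuclideanSpace.norm_eq]
      congr 1
      exact Finset.sum_congr rfl fun k _ => by rw [Real.norm_eq_abs, sq_abs]
    have hyn : ‖Matrix.toEuclideanLin M x‖
        = Real.sqrt (∑ i, (∑ k, M i k * x k) ^ 2) := by
      rw [EuclideanSpace.norm_eq]
      congr 1
      refine Finset.sum_congr rfl fun i _ => ?_
      rw [Real.norm_eq_abs, sq_abs]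
      simp [Matrix.toEuclideanLin_apply, Matrix.mulVec, dotProduct]
    rw [hxn, hyn, ← Real.sqrt_mul hF]
    apply Real.sqrt_le_sqrt
    rw [Finset.sum_mul]
    refine Finset.sum_le_sum fun i _ => ?_
    exact Finset.sum_mul_sq_le_sq_mul_sq Finset.univ _ _
  calc (matOpNorm M) ^ 2 ≤ (Real.sqrt (∑ i, ∑ k, (M i k) ^ 2)) ^ 2 :=
        pow_le_pow_left₀ (matOpNorm_nonneg M) h 2
    _ = _ := Real.sq_sqrt hF

/-- Geometric-mean/arithmetic-mean bound:
`∏_j max(1, ‖W_j‖_op) ≤ (1 + ‖W‖₂²/D)^{D/2}` where `‖W‖₂²` is the total squared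
Frobenius norm of the weight matrices. -/
theorem prod_opNorm_le_rpow {p p' : ℕ → ℕ} (D : ℕ) (hD : 0 < D)
    (W : ∀ j, Matrix (Fin (p j)) (Fin (p' j)) ℝ) :
    ∏ j ∈ Finset.range D, max 1 (matOpNorm (W j))
      ≤ (1 + (∑ j ∈ Finset.range D, ∑ i, ∑ k, (W j i k) ^ 2) / D) ^ ((D : ℝ) / 2) := by
  set z : ℕ → ℝ := fun j => (max 1 (matOpNorm (W j))) ^ 2 with hz
  have hz0 : ∀ j ∈ Finset.range D, (0:ℝ) ≤ z j := fun j _ => sq_nonneg _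
  have hDpos : (0:ℝ) < D := Nat.cast_pos.mpr hD
  have hS0 : (0:ℝ) ≤ ∑ j ∈ Finset.range D, ∑ i, ∑ k, (W j i k) ^ 2 :=
    Finset.sum_nonneg fun j _ => Finset.sum_nonneg fun i _ =>
      Finset.sum_nonneg fun k _ => sq_nonneg _
  set A : ℝ := 1 + (∑ j ∈ Finset.range D, ∑ i, ∑ k, (W j i k) ^ 2) / D with hA
  have hA1 : (1:ℝ) ≤ A := le_add_of_nonneg_right (div_nonneg hS0 hDpos.le)
  have hA0 : (0:ℝ) < A := lt_of_lt_of_le one_pos hA1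
  -- AM-GM with weights 1/D
  have hw : ∑ _j ∈ Finset.range D, (1:ℝ)/D = 1 := by
    rw [Finset.sum_const, Finset.card_range, nsmul_eq_mul]
    field_simp
  have hAM : ∏ j ∈ Finset.range D, (z j) ^ ((1:ℝ)/D)
      ≤ ∑ j ∈ Finset.range D, (1/D) * z j :=
    Real.geom_mean_le_arith_mean_weighted _ _ _
      (fun j _ => by positivity) hw hz0
  have hzle : ∀ j ∈ Finset.range D, z j ≤ 1 + ∑ i, ∑ k, (W j i k) ^ 2 := by
    intro j _
    have hzj : z j = max 1 ((matOpNorm (W j)) ^ 2) := by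
      show (max 1 (matOpNorm (W j))) ^ 2 = max 1 ((matOpNorm (W j)) ^ 2)
      rcases le_total (matOpNorm (W j)) 1 with h | h
      · rw [max_eq_left h, max_eq_left (by nlinarith [matOpNorm_nonneg (W j)]), one_pow]
      · rw [max_eq_right h, max_eq_right (by nlinarith)]
    rw [hzj]
    rcases max_cases 1 ((matOpNorm (W j)) ^ 2) with ⟨h, _⟩ | ⟨h, _⟩ <;> rw [h]
    · have := Finset.sum_nonneg (fun i (_ : i ∈ Finset.univ) =>
        Finset.sum_nonneg fun k (_ : k ∈ Finset.univ) => sq_nonneg (W j i k))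
      linarith
    · linarith [matOpNorm_sq_le_frob (W j)]
  have hsum : ∑ j ∈ Finset.range D, (1/D) * z j ≤ A := by
    calc ∑ j ∈ Finset.range D, (1/D) * z j
        ≤ ∑ j ∈ Finset.range D, (1/D) * (1 + ∑ i, ∑ k, (W j i k) ^ 2) :=
          Finset.sum_le_sum fun j hj =>
            mul_le_mul_of_nonneg_left (hzle j hj) (by positivity)
      _ = A := by
          rw [hA, ← Finset.mul_sum, Finset.sum_add_distrib, Finset.sum_const,
            Finset.card_range, nsmul_eq_mul, mul_one]
          field_simp
  -- main step
  have hP0 : (0:ℝ) ≤ ∏ j ∈ Finset.range D, max 1 (matOpNorm (W j)) :=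
    Finset.prod_nonneg fun j _ => le_trans zero_le_one (le_max_left _ _)
  have key : (∏ j ∈ Finset.range D, max 1 (matOpNorm (W j))) ^ ((2:ℝ)/D) ≤ A := by
    have : (∏ j ∈ Finset.range D, max 1 (matOpNorm (W j))) ^ ((2:ℝ)/D)
        = ∏ j ∈ Finset.range D, (z j) ^ ((1:ℝ)/D) := by
      rw [← Real.finset_prod_rpow _ _ (fun j _ => le_trans zero_le_one (le_max_left _ _)) _]
      refine Finset.prod_congr rfl fun j _ => ?_
      show (max 1 (matOpNorm (W j))) ^ ((2:ℝ)/D)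
          = ((max 1 (matOpNorm (W j))) ^ 2 : ℝ) ^ ((1:ℝ)/D)
      rw [← Real.rpow_natCast (max 1 (matOpNorm (W j))) 2,
        ← Real.rpow_mul (le_trans zero_le_one (le_max_left _ _))]
      congr 1
      push_cast
      ring
    rw [this]
    exact le_trans hAM hsum
  have h2D : (0:ℝ) < (2:ℝ)/D := by positivity
  calc ∏ j ∈ Finset.range D, max 1 (matOpNorm (W j))
      = ((∏ j ∈ Finset.range D, max 1 (matOpNorm (W j))) ^ ((2:ℝ)/D)) ^ ((D:ℝ)/2) := by
        have hexp : (2:ℝ)/D * ((D:ℝ)/2) = 1 := by field_simp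
        rw [← Real.rpow_mul hP0, hexp, Real.rpow_one]
    _ ≤ A ^ ((D:ℝ)/2) :=
        Real.rpow_le_rpow (Real.rpow_nonneg hP0 _) key (by positivity)
end

section
/- Suppose for every y, the function x ↦ f(y|x) on ℝ^{d_x} is strongly convex with parameter κ̲ > 0 and its gradient x ↦ ∇_x f(y|x) is κ̄-Lipschitz, and let R : ℝ^{d_x} → ℝ be convex. Define g(y) = argmin_x [f(y|x) + R(x)] (assumed uniquely defined for all y). If moreover for every fixed x the map y ↦ ∇_x f(y|x) is such that ‖∇_x f(y₁|x) − ∇_x f(y₂|x)‖₂ ≤ κ̄ ‖y₁ − y₂‖₂, then g is Lipschitz with constant at most 2κ̄/κ̲. -/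
open Set

/-- If `x ↦ f(y|x)` is `κ̲`-strongly convex with `κ̄`-Lipschitz gradient (in both `x`
and `y`), and `R` is convex, then the solution map
`g(y) = argmin_x [f(y|x) + R(x)]` is Lipschitz with constant at most `2κ̄/κ̲`. -/
theorem argmin_map_lipschitz (dx dy : ℕ)
    (f : EuclideanSpace ℝ (Fin dy) → EuclideanSpace ℝ (Fin dx) → ℝ)
    (G : EuclideanSpace ℝ (Fin dy) → EuclideanSpace ℝ (Fin dx) → EuclideanSpace ℝ (Fin dx))
    (R : EuclideanSpace ℝ (Fin dx) → ℝ)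
    (κl κu : ℝ) (hκl : 0 < κl)
    (hgrad : ∀ y x, HasGradientAt (f y) (G y x) x)
    (hstrong : ∀ y x x', f y x + (inner ℝ (G y x) (x' - x) : ℝ) + κl / 2 * ‖x' - x‖ ^ 2 ≤ f y x')
    (hlipx : ∀ y x₁ x₂, ‖G y x₁ - G y x₂‖ ≤ κu * ‖x₁ - x₂‖)
    (hlipy : ∀ x y₁ y₂, ‖G y₁ x - G y₂ x‖ ≤ κu * ‖y₁ - y₂‖)
    (hR : ConvexOn ℝ Set.univ R)
    (g : EuclideanSpace ℝ (Fin dy) → EuclideanSpace ℝ (Fin dx))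
    (hg : ∀ y, IsMinOn (fun x => f y x + R x) Set.univ (g y))
    (hguniq : ∀ y x, IsMinOn (fun x' => f y x' + R x') Set.univ x → x = g y) :
    ∀ y₁ y₂, ‖g y₁ - g y₂‖ ≤ 2 * κu / κl * ‖y₁ - y₂‖ := by
  -- quadratic growth at the minimizer
  have quad : ∀ y x, κl / 2 * ‖x - g y‖ ^ 2 ≤ (f y x + R x) - (f y (g y) + R (g y)) := by
    intro y x
    have key : ∀ t ∈ Set.Ioo (0:ℝ) 1,
        κl / 2 * (1 - t) * ‖x - g y‖ ^ 2 ≤ (f y x + R x) - (f y (g y) + R (g y)) := by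
      intro t ht
      obtain ⟨ht0, ht1⟩ := ht
      set x₀ := g y with hx₀
      set xt := x₀ + t • (x - x₀) with hxt
      have hxt' : xt = (1 - t) • x₀ + t • x := by rw [hxt]; module
      have h1 := hstrong y xt x₀
      have h2 := hstrong y xt x
      have e1 : x₀ - xt = (-t) • (x - x₀) := by rw [hxt]; module
      have e2 : x - xt = (1 - t) • (x - x₀) := by rw [hxt]; module
      rw [e1, real_inner_smul_right, norm_smul] at h1
      rw [e2, real_inner_smul_right, norm_smul] at h2
      have hnt : ‖(-t : ℝ)‖ = t := by rw [Real.norm_eq_abs, abs_neg, abs_of_pos ht0]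
      have hnt2 : ‖(1 - t : ℝ)‖ = 1 - t := by rw [Real.norm_eq_abs, abs_of_pos (by linarith)]
      rw [hnt] at h1; rw [hnt2] at h2
      have hRt : R xt ≤ (1 - t) * R x₀ + t * R x := by
        rw [hxt']
        exact hR.2 (mem_univ x₀) (mem_univ x) (by linarith) (le_of_lt ht0) (by ring)
      have hmin : f y x₀ + R x₀ ≤ f y xt + R xt := isMinOn_iff.mp (hg y) xt (mem_univ xt)
      set q := ‖x - x₀‖
      set p := (inner ℝ (G y xt) (x - x₀) : ℝ)
      -- h1 : f y xt + (-t) * p + κl/2 * (t*q)^2 ≤ f y x₀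
      -- h2 : f y xt + (1-t) * p + κl/2 * ((1-t)*q)^2 ≤ f y x
      nlinarith [mul_le_mul_of_nonneg_left h1 (by linarith : (0:ℝ) ≤ 1 - t),
        mul_le_mul_of_nonneg_left h2 (le_of_lt ht0), sq_nonneg q, mul_pos ht0 (by linarith : (0:ℝ) < 1 - t)]
    -- take the limit t → 0
    haveI : (nhdsWithin (0:ℝ) (Set.Ioo (0:ℝ) 1)).NeBot := by
      rw [← mem_closure_iff_nhdsWithin_neBot, closure_Ioo (by norm_num : (0:ℝ) ≠ 1)]
      exact ⟨le_refl 0, zero_le_one⟩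
    have htend : Filter.Tendsto (fun t : ℝ => κl / 2 * (1 - t) * ‖x - g y‖ ^ 2)
        (nhdsWithin (0:ℝ) (Set.Ioo (0:ℝ) 1)) (nhds (κl / 2 * (1 - 0) * ‖x - g y‖ ^ 2)) :=
      ((continuous_const.mul (continuous_const.sub continuous_id)).mul continuous_const).tendsto 0
        |>.mono_left nhdsWithin_le_nhds
    have := le_of_tendsto htend (eventually_mem_nhdsWithin.mono (fun t ht => key t ht))
    linarith [this]
  intro y₁ y₂
  set Δ := g y₁ - g y₂ with hΔ
  have hκu : 0 ≤ κu * ‖y₁ - y₂‖ := le_trans (norm_nonneg _) (hlipy (g y₁) y₁ y₂)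
  -- mean value inequality for h := f y₁ - f y₂
  have hmv : (f y₁ (g y₂) - f y₂ (g y₂)) - (f y₁ (g y₁) - f y₂ (g y₁)) ≤ κu * ‖y₁ - y₂‖ * ‖Δ‖ := by
    have hd : ∀ z : EuclideanSpace ℝ (Fin dx), HasFDerivAt (fun x => f y₁ x - f y₂ x)
        ((InnerProductSpace.toDual ℝ _) (G y₁ z - G y₂ z)) z := by
      intro z
      have := (hgrad y₁ z).hasFDerivAt.sub (hgrad y₂ z).hasFDerivAt
      rw [map_sub]; exact this
    have hb : ∀ z : EuclideanSpace ℝ (Fin dx),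
        ‖(InnerProductSpace.toDual ℝ (EuclideanSpace ℝ (Fin dx))) (G y₁ z - G y₂ z)‖ ≤ κu * ‖y₁ - y₂‖ := by
      intro z
      rw [(InnerProductSpace.toDual ℝ _).norm_map]
      exact hlipy z y₁ y₂
    have := Convex.norm_image_sub_le_of_norm_hasFDerivWithin_le
      (f := fun x => f y₁ x - f y₂ x)
      (fun z _ => (hd z).hasFDerivWithinAt) (fun z _ => hb z) convex_univ
      (mem_univ (g y₁)) (mem_univ (g y₂))
    calc (f y₁ (g y₂) - f y₂ (g y₂)) - (f y₁ (g y₁) - f y₂ (g y₁))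
        ≤ ‖(f y₁ (g y₂) - f y₂ (g y₂)) - (f y₁ (g y₁) - f y₂ (g y₁))‖ := le_abs_self _
      _ ≤ κu * ‖y₁ - y₂‖ * ‖g y₂ - g y₁‖ := this
      _ = κu * ‖y₁ - y₂‖ * ‖Δ‖ := by rw [hΔ, norm_sub_rev (g y₂)]
  have q1 := quad y₁ (g y₂)
  have q2 := quad y₂ (g y₁)
  have hn1 : ‖g y₂ - g y₁‖ = ‖Δ‖ := by rw [hΔ, ← norm_neg, neg_sub]
  rw [hn1] at q1
  rw [← hΔ] at q2
  -- q1 + q2 : κl * ‖Δ‖^2 ≤ hmv's LHS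
  have hcomb : κl * ‖Δ‖ ^ 2 ≤ κu * ‖y₁ - y₂‖ * ‖Δ‖ := by nlinarith
  rcases eq_or_lt_of_le (norm_nonneg Δ) with h0 | h0
  · rw [← h0, div_mul_eq_mul_div]
    apply div_nonneg _ hκl.le
    nlinarith
  · have : κl * ‖Δ‖ ≤ κu * ‖y₁ - y₂‖ := by
      nlinarith
    rw [div_mul_eq_mul_div, le_div_iff₀ hκl]
    nlinarith
end
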